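/- Let b be a bispecial factor of a Sturmian word u with |b| ≥ 1 containing both letters, and let r₀(b), r₁(b) be its two return words. Then |r₀(b)| + |r₁(b)| = |b| + 2. -/

import Mathlib

open Filter Topology

namespace SturmianPaper

variable {A : Type*} [DecidableEq A]

/-- The factor `w` occurs in the infinite word `u` at position `i`. -/
def FactorAt (u : ℕ → A) (w : List A) (i : ℕ) : Prop :=
  w = (List.range w.length).map fun j => u (i + j)

/-- `w` is a factor of the infinite word `u`. -/
def IsFactor (u : ℕ → A) (w : List A) : Prop := ∃ i, FactorAt u w i

/-- The factor complexity of `u`: the number of factors of length `n`. -/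
noncomputable def complexity (u : ℕ → A) (n : ℕ) : ℕ :=
  Set.ncard {w : List A | IsFactor u w ∧ w.length = n}

/-- A Sturmian word: complexity `n + 1` for every `n` (this forces aperiodicity). -/
def IsSturmian (u : ℕ → A) : Prop := ∀ n, complexity u n = n + 1

/-- `u` is eventually periodic. -/
def EventuallyPeriodic (u : ℕ → A) : Prop :=
  ∃ p > 0, ∃ N, ∀ n ≥ N, u (n + p) = u n

/-- `u` is uniformly recurrent: every factor occurs with bounded gaps. -/
def UniformlyRecurrent (u : ℕ → A) : Prop :=
  ∀ w, IsFactor u w → ∃ B, ∀ k, ∃ i, k ≤ i ∧ i < k + B ∧ FactorAt u w i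

/-- The number of occurrences of `w` in the finite word `x`. -/
def occCount (x w : List A) : ℕ :=
  ((List.range (x.length + 1)).filter fun i => decide (w <+: x.drop i)).length

/-- `v` is a return word of the factor `w` of `u`. -/
def IsReturnWord (u : ℕ → A) (w v : List A) : Prop :=
  v ≠ [] ∧ IsFactor u (v ++ w) ∧ w <+: v ++ w ∧ occCount (v ++ w) w = 2

/-- Recurrence function: `R n + 1` is the maximal length of a complete return word
`v ++ w` over factors `w` of length `n` and return words `v` of `w`. -/
noncomputable def recFun (u : ℕ → A) (n : ℕ) : ℕ :=
  sSup {m | ∃ w v, IsFactor u w ∧ w.length = n ∧ IsReturnWord u w v ∧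
    m + 1 = v.length + w.length}

/-- `v = w ^ (|v| / |w|)`: `v` is a fractional power of `w`,
i.e. a prefix of `w w w ⋯` of length at least `|w|`. -/
def FracPow (w v : List A) : Prop :=
  w ≠ [] ∧ w.length ≤ v.length ∧ ∀ i < v.length, v[i]? = w[i % w.length]?

/-- The set of rational exponents `r` (viewed inside `ℝ`) such that `w ^ r ∈ L(u)`. -/
def expSet (u : ℕ → A) (w : List A) : Set ℝ :=
  {r | ∃ v, IsFactor u v ∧ FracPow w v ∧ r = (v.length : ℝ) / (w.length : ℝ)}

/-- The index of the factor `w` in `u`: `sup {r ∈ ℚ | w ^ r ∈ L(u)}`. -/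
noncomputable def index (u : ℕ → A) (w : List A) : ℝ := sSup (expSet u w)

/-- A finite word is primitive if it is not a proper integer power. -/
def Primitive (w : List A) : Prop :=
  w ≠ [] ∧ ∀ (z : List A) (k : ℕ), 2 ≤ k → w ≠ (List.replicate k z).flatten

/-- `w` is left special in `u` (alphabet `Bool`, `true = A`, `false = B`). -/
def LeftSpecial (u : ℕ → Bool) (w : List Bool) : Prop :=
  IsFactor u (true :: w) ∧ IsFactor u (false :: w)

/-- `w` is right special in `u`. -/
def RightSpecial (u : ℕ → Bool) (w : List Bool) : Prop :=
  IsFactor u (w ++ [true]) ∧ IsFactor u (w ++ [false])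

/-- The Sturmian word of slope `α` and intercept `x₀`, coding the orbit of `x₀`
under the exchange of the two intervals `I_A = [0, α)` (coded `true`) and
`I_B = [α, 1)` (coded `false`); the exchange is the rotation `x ↦ x + (1 - α) mod 1`. -/
noncomputable def sturmianWord (α x₀ : ℝ) : ℕ → Bool :=
  fun n => decide (Int.fract (x₀ + n * (1 - α)) < α)

/-- The Sturmian morphism `A ↦ AᶜB`, `B ↦ A` applied to a finite word. -/
def phiW (c : ℕ) (w : List Bool) : List Bool :=
  (w.map fun b => if b then List.replicate c true ++ [false] else [true]).flatten

/-- The Sturmian morphism `A ↦ AᶜB`, `B ↦ A` applied to an infinite word. -/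
noncomputable def phiInf (c : ℕ) (u : ℕ → Bool) : ℕ → Bool :=
  fun n => (phiW c ((List.range (n + 1)).map u)).getD n false

/-!
Write `n = |b|`. A Sturmian word has exactly one right special and one left special factor of
each length, so every factor of length `n` other than `b` extends uniquely on either side.
Reading the factors of length `n + 1` (the edges of the Rauzy graph) along an occurrence of a
return word, each edge therefore determines the next and the previous one until `b` is met again:
the path of a return word is fixed by the letter following `b`, never repeats an edge, and shares
no edge with the path of the other return word. As `u` is recurrent, every edge lies on one of
the two paths, so `|r₀| + |r₁|` is the number `n + 2` of factors of length `n + 1`.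
-/

section Windows

variable {α : Type*} {u : ℕ → α}

def window (u : ℕ → α) (i m : ℕ) : List α := (List.range m).map fun j => u (i + j)

@[simp]
lemma length_window (u : ℕ → α) (i m : ℕ) : (window u i m).length = m := by
  simp [window]

lemma factorAt_iff_eq_window {w : List α} {i : ℕ} : FactorAt u w i ↔ w = window u i w.length :=
  Iff.rfl

lemma factorAt_window (u : ℕ → α) (i m : ℕ) : FactorAt u (window u i m) i := by
  rw [factorAt_iff_eq_window, length_window]

lemma isFactor_window (u : ℕ → α) (i m : ℕ) : IsFactor u (window u i m) :=
  ⟨i, factorAt_window u i m⟩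

lemma window_eq_window_iff {i i' m : ℕ} :
    window u i m = window u i' m ↔ ∀ j < m, u (i + j) = u (i' + j) := by
  simp [window, List.map_inj_left]

lemma window_add (u : ℕ → α) (i m m' : ℕ) :
    window u i (m + m') = window u i m ++ window u (i + m) m' := by
  simp [window, List.range_add, add_assoc]

lemma window_succ (u : ℕ → α) (i m : ℕ) : window u i (m + 1) = window u i m ++ [u (i + m)] := by
  rw [window_add]
  simp [window]

lemma window_succ' (u : ℕ → α) (i m : ℕ) : window u i (m + 1) = u i :: window u (i + 1) m := by
  rw [add_comm m 1, window_add]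
  simp [window]

lemma take_window {i m t : ℕ} (h : t ≤ m) : (window u i m).take t = window u i t := by
  obtain ⟨k, rfl⟩ := Nat.exists_eq_add_of_le h
  rw [window_add, List.take_left' (length_window u i t)]

lemma drop_window {i m t : ℕ} (h : t ≤ m) : (window u i m).drop t = window u (i + t) (m - t) := by
  obtain ⟨k, rfl⟩ := Nat.exists_eq_add_of_le h
  rw [window_add, List.drop_left' (length_window u i t), Nat.add_sub_cancel_left]

lemma window_succ_eq_window_succ_iff {i i' m : ℕ} :
    window u i (m + 1) = window u i' (m + 1) ↔
      u i = u i' ∧ window u (i + 1) m = window u (i' + 1) m := by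
  rw [window_succ', window_succ', List.cons.injEq]

lemma window_succ_eq_window_succ_iff' {i i' m : ℕ} :
    window u i (m + 1) = window u i' (m + 1) ↔
      window u i m = window u i' m ∧ u (i + m) = u (i' + m) := by
  rw [window_succ, window_succ, ← List.concat_eq_append, ← List.concat_eq_append, List.concat_inj]

lemma window_eq_of_forall_window_succ_eq {i i' g m : ℕ}
    (h : ∀ s < g, window u (i + s) (m + 1) = window u (i' + s) (m + 1)) :
    window u i g = window u i' g :=
  window_eq_window_iff.2 fun s hs => (window_succ_eq_window_succ_iff.1 (h s hs)).1

lemma window_succ_eq_append_of_factorAt {w : List α} {i : ℕ} (hw : FactorAt u w i) :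
    window u i (w.length + 1) = w ++ [u (i + w.length)] := by
  rw [window_succ, ← factorAt_iff_eq_window.1 hw]

lemma prefix_drop_window_iff {w : List α} {i j m : ℕ} (h : j + w.length ≤ m) :
    w <+: (window u i m).drop j ↔ FactorAt u w (i + j) := by
  rw [drop_window (by omega), List.prefix_iff_eq_take, take_window (by omega)]
  rfl

lemma complexity_eq_ncard_range_window (u : ℕ → α) (m : ℕ) :
    complexity u m = (Set.range (window u · m)).ncard := by
  unfold complexity
  congr 1
  ext w
  constructor
  · rintro ⟨⟨i, hi⟩, rfl⟩
    exact ⟨i, hi.symm⟩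
  · rintro ⟨i, rfl⟩
    exact ⟨isFactor_window u i m, length_window u i m⟩

lemma complexity_zero (u : ℕ → α) : complexity u 0 = 1 := by
  simp [complexity_eq_ncard_range_window, window]

end Windows

section Recurrence

variable {α : Type*} {u : ℕ → α}

lemma EventuallyPeriodic.complexity_le (h : EventuallyPeriodic u) :
    ∃ C, ∀ m, complexity u m ≤ C := by
  classical
  obtain ⟨p, hp, N, hN⟩ := h
  have hearly : ∀ m i, ∃ j < N + p, window u i m = window u j m := by
    intro m i
    induction i using Nat.strong_induction_on with
    | _ i ih =>
      by_cases hi : i < N + p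
      · exact ⟨i, hi, rfl⟩
      obtain ⟨j, hj, hij⟩ := ih (i - p) (by omega)
      refine ⟨j, hj, Eq.trans (window_eq_window_iff.2 fun t _ => ?_) hij⟩
      rw [← hN (i - p + t) (by omega)]
      congr 1
      omega
  refine ⟨N + p, fun m => ?_⟩
  have hsub : Set.range (window u · m) ⊆ ↑((Finset.range (N + p)).image (window u · m)) := by
    rintro _ ⟨i, rfl⟩
    obtain ⟨j, hj, hij⟩ := hearly m i
    simpa [hij] using ⟨j, hj, rfl⟩
  calc complexity u m ≤ ((Finset.range (N + p)).image (window u · m)).card := by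
        rw [complexity_eq_ncard_range_window, ← Set.ncard_coe_finset]
        exact Set.ncard_le_ncard hsub
    _ ≤ N + p := Finset.card_image_le.trans (Finset.card_range _).le

lemma IsSturmian.not_eventuallyPeriodic (hst : IsSturmian u) : ¬ EventuallyPeriodic u := by
  intro h
  obtain ⟨C, hC⟩ := h.complexity_le
  have := hC C
  rw [hst C] at this
  omega

lemma EventuallyPeriodic.of_shift {k : ℕ} (h : EventuallyPeriodic fun s => u (k + s)) :
    EventuallyPeriodic u := by
  obtain ⟨p, hp, N, hN⟩ := h
  refine ⟨p, hp, k + N, fun n hn => ?_⟩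
  have := hN (n - k) (by omega)
  simp only at this
  rwa [← add_assoc, Nat.add_sub_cancel' (by omega)] at this

lemma window_succ_eq_of_complexity_succ_le [Finite α] {m : ℕ}
    (h : complexity u (m + 1) ≤ complexity u m) {i i' : ℕ}
    (he : window u i m = window u i' m) : window u i (m + 1) = window u i' (m + 1) := by
  have hfin : (Set.range (window u · (m + 1))).Finite :=
    (List.finite_length_eq α (m + 1)).subset (by rintro _ ⟨j, rfl⟩; simp)
  have himage : List.dropLast '' Set.range (window u · (m + 1)) = Set.range (window u · m) := by
    rw [← Set.range_comp]
    congr 1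
    funext j
    simp [window_succ]
  have hinj : Set.InjOn List.dropLast (Set.range (window u · (m + 1))) := by
    refine Set.injOn_of_ncard_image_eq (le_antisymm (Set.ncard_image_le hfin) ?_) hfin
    rw [himage, ← complexity_eq_ncard_range_window, ← complexity_eq_ncard_range_window]
    exact h
  exact hinj ⟨i, rfl⟩ ⟨i', rfl⟩ (by simpa [window_succ] using he)

/-- By pigeonhole two windows of length `m + 1` coincide, and `u` repeats from there on. -/
lemma eventuallyPeriodic_of_window_succ_eq [Finite α] {m : ℕ}
    (h : ∀ i i', window u i m = window u i' m → window u i (m + 1) = window u i' (m + 1)) :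
    EventuallyPeriodic u := by
  obtain ⟨a, -, c, -, hac, hy⟩ := Set.infinite_univ.exists_ne_map_eq_of_mapsTo
    (t := {l : List α | l.length = m + 1}) (fun i _ => length_window u i (m + 1))
    (List.finite_length_eq α (m + 1))
  wlog hlt : a < c generalizing a c
  · exact this c a hac.symm hy.symm (by omega)
  have hshift : ∀ t, window u (a + t) (m + 1) = window u (c + t) (m + 1) := by
    intro t
    induction t with
    | zero => exact hy
    | succ t ih => exact h _ _ (window_succ_eq_window_succ_iff.1 ih).2
  refine ⟨c - a, by omega, a, fun n hn => ?_⟩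
  have := (window_succ_eq_window_succ_iff.1 (hshift (n - a))).1
  rw [Nat.add_sub_cancel' hn] at this
  rw [this]
  congr 1
  omega

lemma exists_succ_le_of_lt_add {f : ℕ → ℕ} {M : ℕ} (h : f M < f 0 + M) :
    ∃ j < M, f (j + 1) ≤ f j := by
  by_contra! hgrow
  have : ∀ j ≤ M, f 0 + j ≤ f j := by
    intro j
    induction j with
    | zero => simp
    | succ j ih => intro hj; have := hgrow j (by omega); have := ih (by omega); omega
  have := this M le_rfl
  omega

/-- Morse–Hedlund: if `w` did not occur after `k`, the complexity of the suffix starting at `k`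
would stay below `n + 1` at `n = |w|`, hence stall, making the suffix eventually periodic. -/
theorem IsSturmian.exists_factorAt_ge [Finite α] (hst : IsSturmian u) {w : List α}
    (hw : IsFactor u w) (k : ℕ) : ∃ i, k ≤ i ∧ FactorAt u w i := by
  by_contra! hno
  set v : ℕ → α := fun s => u (k + s)
  have hv : ∀ s m, window v s m = window u (k + s) m := by simp [window, v, add_assoc]
  have hsub : Set.range (window v · w.length) ⊆ Set.range (window u · w.length) \ {w} := by
    rintro _ ⟨s, rfl⟩
    refine ⟨⟨k + s, (hv s _).symm⟩, fun hs => hno (k + s) (by omega) ?_⟩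
    simp only [Set.mem_singleton_iff, hv] at hs
    rw [factorAt_iff_eq_window, ← hs, length_window]
  have hw' : w ∈ Set.range (window u · w.length) := by
    obtain ⟨i, hi⟩ := hw
    exact ⟨i, hi.symm⟩
  have hlow : complexity v w.length < complexity v 0 + w.length := by
    have hfin : (Set.range (window u · w.length)).Finite :=
      (List.finite_length_eq α w.length).subset (by rintro _ ⟨j, rfl⟩; simp)
    have := Set.ncard_le_ncard hsub hfin.sdiff
    rw [Set.ncard_sdiff_singleton_of_mem hw', ← complexity_eq_ncard_range_window u, hst,
      ← complexity_eq_ncard_range_window v] at this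
    rw [complexity_zero]
    omega
  obtain ⟨j, -, hj⟩ := exists_succ_le_of_lt_add hlow
  exact hst.not_eventuallyPeriodic (eventuallyPeriodic_of_window_succ_eq
    fun _ _ => window_succ_eq_of_complexity_succ_le hj).of_shift

lemma IsSturmian.exists_cons_isFactor [Finite α] (hst : IsSturmian u) {w : List α}
    (hw : IsFactor u w) : ∃ a, IsFactor u (a :: w) := by
  obtain ⟨i, hi, hwi⟩ := hst.exists_factorAt_ge hw 1
  rw [factorAt_iff_eq_window] at hwi
  refine ⟨u (i - 1), i - 1, ?_⟩
  rw [factorAt_iff_eq_window, List.length_cons, window_succ', Nat.sub_add_cancel hi, ← hwi]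

end Recurrence

section SpecialFactors

lemma ncard_add_two_le_of_branching {β γ : Type*} {S : Set β} {T : Set γ} (hS : S.Finite)
    (p : β → γ) (e : Bool → γ → β) (hpe : ∀ a t, p (e a t) = t)
    (he : ∀ t, e true t ≠ e false t) (hT : ∀ t ∈ T, ∃ a, e a t ∈ S)
    {t₁ t₂ : γ} (ht : t₁ ≠ t₂) (h₁ : ∀ a, e a t₁ ∈ S) (h₂ : ∀ a, e a t₂ ∈ S) :
    T.ncard + 2 ≤ S.ncard := by
  have hne : e true t₁ ≠ e true t₂ := fun h => ht (by simpa [hpe] using congrArg p h)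
  have hpair : {e true t₁, e true t₂} ⊆ S := Set.pair_subset (h₁ true) (h₂ true)
  have hcover : T ⊆ p '' (S \ {e true t₁, e true t₂}) := by
    intro t htT
    by_cases hspecial : t = t₁ ∨ t = t₂
    · refine ⟨e false t, ⟨?_, ?_⟩, hpe _ _⟩
      · rcases hspecial with rfl | rfl
        exacts [h₁ false, h₂ false]
      · rintro (h | h) <;> have := congrArg p h <;> simp only [hpe] at this <;> subst this
        exacts [he _ h.symm, he _ h.symm]
    · obtain ⟨a, ha⟩ := hT t htT
      refine ⟨e a t, ⟨ha, ?_⟩, hpe _ _⟩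
      rintro (h | h) <;> have := congrArg p h <;> simp only [hpe] at this <;> tauto
  have hT_le : T.ncard ≤ (S \ {e true t₁, e true t₂}).ncard :=
    (Set.ncard_le_ncard hcover ((hS.sdiff).image _)).trans (Set.ncard_image_le hS.sdiff)
  rw [Set.ncard_sdiff hpair, Set.ncard_pair hne] at hT_le
  have := Set.ncard_le_ncard hpair hS
  rw [Set.ncard_pair hne] at this
  omega

variable {u : ℕ → Bool}

theorem IsSturmian.rightSpecial_unique (hst : IsSturmian u) {f g : List Bool}
    (hf : RightSpecial u f) (hg : RightSpecial u g) (hlen : f.length = g.length) : f = g := by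
  by_contra hfg
  have := ncard_add_two_le_of_branching (T := {w | IsFactor u w ∧ w.length = f.length})
    ((List.finite_length_eq Bool (f.length + 1)).subset fun _ h => h.2)
    List.dropLast (fun a w => w ++ [a]) (fun _ _ => List.dropLast_concat) (by simp)
    (fun w ⟨⟨i, hi⟩, hw⟩ => ⟨u (i + w.length), ⟨i, by
      rw [factorAt_iff_eq_window] at hi ⊢
      rw [List.length_append, List.length_singleton, window_succ, ← hi]⟩, by simp [hw]⟩)
    hfg (S := {w | IsFactor u w ∧ w.length = f.length + 1})
    (fun a => ⟨by cases a; exacts [hf.2, hf.1], by simp⟩)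
    (fun a => ⟨by cases a; exacts [hg.2, hg.1], by simp [hlen]⟩)
  have h₁ := hst f.length
  have h₂ := hst (f.length + 1)
  unfold complexity at h₁ h₂
  omega

theorem IsSturmian.leftSpecial_unique (hst : IsSturmian u) {f g : List Bool}
    (hf : LeftSpecial u f) (hg : LeftSpecial u g) (hlen : f.length = g.length) : f = g := by
  by_contra hfg
  have := ncard_add_two_le_of_branching (T := {w | IsFactor u w ∧ w.length = f.length})
    ((List.finite_length_eq Bool (f.length + 1)).subset fun _ h => h.2)
    List.tail List.cons (fun _ _ => rfl) (by simp)
    (fun w ⟨hw, _⟩ => (hst.exists_cons_isFactor hw).imp fun _ h => ⟨h, by simpa⟩)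
    hfg (S := {w | IsFactor u w ∧ w.length = f.length + 1})
    (fun a => ⟨by cases a; exacts [hf.2, hf.1], by simp⟩)
    (fun a => ⟨by cases a; exacts [hg.2, hg.1], by simp [hlen]⟩)
  have h₁ := hst f.length
  have h₂ := hst (f.length + 1)
  unfold complexity at h₁ h₂
  omega

variable {b f : List Bool}

lemma IsSturmian.eq_of_isFactor_append (hst : IsSturmian u) (hrs : RightSpecial u b)
    (hlen : f.length = b.length) (hfb : f ≠ b) {a a' : Bool}
    (ha : IsFactor u (f ++ [a])) (ha' : IsFactor u (f ++ [a'])) : a = a' := by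
  by_contra haa
  refine hfb (hst.rightSpecial_unique ?_ hrs hlen)
  cases a <;> cases a' <;> first | exact absurd rfl haa | exact ⟨ha, ha'⟩ | exact ⟨ha', ha⟩

lemma IsSturmian.eq_of_isFactor_cons (hst : IsSturmian u) (hls : LeftSpecial u b)
    (hlen : f.length = b.length) (hfb : f ≠ b) {a a' : Bool}
    (ha : IsFactor u (a :: f)) (ha' : IsFactor u (a' :: f)) : a = a' := by
  by_contra haa
  refine hfb (hst.leftSpecial_unique ?_ hls hlen)
  cases a <;> cases a' <;> first | exact absurd rfl haa | exact ⟨ha, ha'⟩ | exact ⟨ha', ha⟩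

end SpecialFactors

section ReturnWindows

variable {α : Type*} {u : ℕ → α} {w : List α}

structure IsReturnWindow (u : ℕ → α) (w : List α) (i g : ℕ) : Prop where
  pos : 0 < g
  factorAt_start : FactorAt u w i
  factorAt_end : FactorAt u w (i + g)
  not_factorAt : ∀ j, 0 < j → j < g → ¬ FactorAt u w (i + j)

lemma IsReturnWord.exists_isReturnWindow [DecidableEq α] {v : List α}
    (h : IsReturnWord u w v) : ∃ i, IsReturnWindow u w i v.length ∧ v = window u i v.length := by
  obtain ⟨hv, ⟨i, hi⟩, hpre, hocc⟩ := h
  rw [factorAt_iff_eq_window, List.length_append, window_add] at hi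
  obtain ⟨hvi, hwi⟩ := List.append_inj hi (length_window u i v.length).symm
  have hocc_iff : ∀ j ≤ v.length, w <+: (v ++ w).drop j ↔ FactorAt u w (i + j) := fun j hj => by
    rw [hi, ← window_add]
    exact prefix_drop_window_iff (by omega)
  have hpos : 0 < v.length := List.length_pos_iff.2 hv
  refine ⟨i, ⟨hpos, (hocc_iff 0 (Nat.zero_le _)).1 hpre, hwi, fun j hj0 hjv hj => ?_⟩, hvi⟩
  have hsub : [0, j, v.length] ⊆
      (List.range ((v ++ w).length + 1)).filter fun k => decide (w <+: (v ++ w).drop k) := by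
    have hlen : (v ++ w).length = v.length + w.length := List.length_append
    intro k hk
    simp only [List.mem_cons, List.not_mem_nil, or_false] at hk
    rw [List.mem_filter, List.mem_range, decide_eq_true_eq, hlen]
    rcases hk with rfl | rfl | rfl
    · exact ⟨by omega, hpre⟩
    · exact ⟨by omega, (hocc_iff k hjv.le).2 hj⟩
    · exact ⟨by omega, (hocc_iff _ le_rfl).2 hwi⟩
  have := (List.subperm_of_subset (by simp; omega) hsub).length_le
  simp only [occCount] at hocc
  simp only [List.length_cons, List.length_nil] at this
  omega

lemma exists_isReturnWindow_of_le (hrec : ∀ k, ∃ i, k ≤ i ∧ FactorAt u w i) {p q : ℕ}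
    (hq : FactorAt u w q) (hqp : q ≤ p) : ∃ i g, IsReturnWindow u w i g ∧ i ≤ p ∧ p < i + g := by
  classical
  have hnext : ∃ i, p + 1 ≤ i ∧ FactorAt u w i := hrec (p + 1)
  obtain ⟨i, hwi, hip, hlast⟩ :
      ∃ i, FactorAt u w i ∧ i ≤ p ∧ ∀ j, i < j → j ≤ p → ¬ FactorAt u w j :=
    ⟨_, Nat.findGreatest_spec hqp hq, Nat.findGreatest_le p, fun _ => Nat.findGreatest_is_greatest⟩
  obtain ⟨i', ⟨hpi', hwi'⟩, hfirst⟩ :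
      ∃ i', (p + 1 ≤ i' ∧ FactorAt u w i') ∧ ∀ j < i', ¬ (p + 1 ≤ j ∧ FactorAt u w j) :=
    ⟨_, Nat.find_spec hnext, fun _ => Nat.find_min hnext⟩
  refine ⟨i, i' - i, ⟨by omega, hwi, by rwa [Nat.add_sub_cancel' (by omega)],
    fun j hj0 hj hwj => ?_⟩, hip, by omega⟩
  rcases le_or_gt (i + j) p with hle | hgt
  · exact hlast _ (by omega) hle hwj
  · exact hfirst _ (by omega) ⟨hgt, hwj⟩

end ReturnWindows

section Bispecial

variable {u : ℕ → Bool} {b : List Bool} {i i' g g' : ℕ}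

lemma IsSturmian.window_succ_eq_of_window_eq (hst : IsSturmian u) (hrs : RightSpecial u b)
    (hi : ¬ FactorAt u b (i + 1))
    (he : window u i (b.length + 1) = window u i' (b.length + 1)) :
    window u (i + 1) (b.length + 1) = window u (i' + 1) (b.length + 1) := by
  have hv := (window_succ_eq_window_succ_iff.1 he).2
  have hfb : window u (i + 1) b.length ≠ b := fun h => hi h.symm
  have hext : u (i + 1 + b.length) = u (i' + 1 + b.length) := by
    refine hst.eq_of_isFactor_append hrs (length_window ..) hfb ?_ ?_
    · rw [← window_succ]; exact isFactor_window ..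
    · rw [hv, ← window_succ]; exact isFactor_window ..
  rw [window_succ, window_succ, hv, hext]

lemma IsSturmian.window_eq_of_window_succ_eq (hst : IsSturmian u) (hls : LeftSpecial u b)
    (hi : ¬ FactorAt u b (i + 1))
    (he : window u (i + 1) (b.length + 1) = window u (i' + 1) (b.length + 1)) :
    window u i (b.length + 1) = window u i' (b.length + 1) := by
  have hv := (window_succ_eq_window_succ_iff'.1 he).1
  have hfb : window u (i + 1) b.length ≠ b := fun h => hi h.symm
  have hext : u i = u i' := by
    refine hst.eq_of_isFactor_cons hls (length_window ..) hfb ?_ ?_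
    · rw [← window_succ']; exact isFactor_window ..
    · rw [hv, ← window_succ']; exact isFactor_window ..
  rw [window_succ', window_succ', hv, hext]

lemma IsReturnWindow.window_add_eq (hst : IsSturmian u) (hrs : RightSpecial u b)
    (h : IsReturnWindow u b i g) (he : window u i (b.length + 1) = window u i' (b.length + 1)) :
    ∀ s < g, window u (i + s) (b.length + 1) = window u (i' + s) (b.length + 1) := by
  intro s
  induction s with
  | zero => exact fun _ => he
  | succ s ih =>
    intro hs
    exact hst.window_succ_eq_of_window_eq hrs (h.not_factorAt (s + 1) (by omega) hs) (ih (by omega))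

lemma IsReturnWindow.le_of_window_eq (hst : IsSturmian u) (hrs : RightSpecial u b)
    (h : IsReturnWindow u b i g) (h' : IsReturnWindow u b i' g')
    (he : window u i (b.length + 1) = window u i' (b.length + 1)) : g ≤ g' := by
  by_contra! hlt
  have hlast := h.window_add_eq hst hrs he (g' - 1) (by omega)
  rw [window_succ_eq_window_succ_iff, add_assoc, add_assoc, Nat.sub_add_cancel h'.pos] at hlast
  exact h.not_factorAt g' h'.pos hlt (h'.factorAt_end.trans hlast.2.symm)

theorem IsReturnWindow.eq_of_window_eq (hst : IsSturmian u) (hrs : RightSpecial u b)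
    (h : IsReturnWindow u b i g) (h' : IsReturnWindow u b i' g')
    (he : window u i (b.length + 1) = window u i' (b.length + 1)) :
    g = g' ∧ ∀ s < g, window u (i + s) (b.length + 1) = window u (i' + s) (b.length + 1) :=
  ⟨(h.le_of_window_eq hst hrs h' he).antisymm (h'.le_of_window_eq hst hrs h he.symm),
    h.window_add_eq hst hrs he⟩

lemma IsReturnWindow.eq_of_window_add_eq_of_le (hst : IsSturmian u) (hls : LeftSpecial u b)
    (hi : FactorAt u b i) (h' : IsReturnWindow u b i' g') {j j' : ℕ} (hj' : j' < g')
    (hjj' : j ≤ j') (he : window u (i + j) (b.length + 1) = window u (i' + j') (b.length + 1)) :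
    j = j' ∧ window u i (b.length + 1) = window u i' (b.length + 1) := by
  induction j generalizing j' with
  | zero =>
    obtain _ | j' := j'
    · exact ⟨rfl, he⟩
    have hb := (window_succ_eq_window_succ_iff'.1 he).1
    exact absurd (hi.trans hb) (h'.not_factorAt (j' + 1) (by omega) hj')
  | succ j ih =>
    obtain _ | j' := j'
    · omega
    have := ih (by omega) (by omega) (hst.window_eq_of_window_succ_eq hls
      (h'.not_factorAt (j' + 1) (by omega) hj') he.symm).symm
    exact ⟨by omega, this.2⟩

theorem IsReturnWindow.eq_of_window_add_eq (hst : IsSturmian u) (hls : LeftSpecial u b)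
    (h : IsReturnWindow u b i g) (h' : IsReturnWindow u b i' g') {j j' : ℕ} (hj : j < g)
    (hj' : j' < g') (he : window u (i + j) (b.length + 1) = window u (i' + j') (b.length + 1)) :
    j = j' ∧ window u i (b.length + 1) = window u i' (b.length + 1) := by
  rcases le_total j j' with hjj' | hjj'
  · exact h'.eq_of_window_add_eq_of_le hst hls h.factorAt_start hj' hjj' he
  · obtain ⟨hj, he'⟩ := h.eq_of_window_add_eq_of_le hst hls h'.factorAt_start hj hjj' he.symm
    exact ⟨hj.symm, he'.symm⟩

end Bispecial

section RauzyPaths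

/-- The edges of the Rauzy graph of order `m - 1` traversed by `u` between positions `i` and
`i + g`. -/
def rauzyPath (u : ℕ → Bool) (m i g : ℕ) : Finset (List Bool) :=
  (Finset.range g).image fun j => window u (i + j) m

variable {u : ℕ → Bool} {b : List Bool} {i i' g g' : ℕ}

lemma coe_rauzyPath_subset (m : ℕ) : ↑(rauzyPath u m i g) ⊆ Set.range (window u · m) := by
  intro x hx
  obtain ⟨j, -, rfl⟩ := Finset.mem_image.1 hx
  exact ⟨i + j, rfl⟩

lemma IsReturnWindow.card_rauzyPath (hst : IsSturmian u) (hls : LeftSpecial u b)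
    (h : IsReturnWindow u b i g) : (rauzyPath u (b.length + 1) i g).card = g := by
  rw [rauzyPath, Finset.card_image_of_injOn, Finset.card_range]
  intro j hj j' hj' he
  exact (h.eq_of_window_add_eq hst hls h (Finset.mem_range.1 hj) (Finset.mem_range.1 hj') he).1

lemma IsReturnWindow.disjoint_rauzyPath (hst : IsSturmian u) (hls : LeftSpecial u b)
    (h : IsReturnWindow u b i g) (h' : IsReturnWindow u b i' g')
    (hne : window u i (b.length + 1) ≠ window u i' (b.length + 1)) :
    Disjoint (rauzyPath u (b.length + 1) i g) (rauzyPath u (b.length + 1) i' g') := by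
  simp only [rauzyPath, Finset.disjoint_left, Finset.mem_image, Finset.mem_range]
  rintro _ ⟨j, hj, rfl⟩ ⟨j', hj', he⟩
  exact hne (h.eq_of_window_add_eq hst hls h' hj hj' he.symm).2

/-- By recurrence every factor occurs after `i₀`, hence inside a return window, whose first edge
is one of the two. -/
theorem IsSturmian.range_window_eq_union_rauzyPath (hst : IsSturmian u) (hrs : RightSpecial u b)
    {i₀ i₁ g₀ g₁ : ℕ} (h₀ : IsReturnWindow u b i₀ g₀) (h₁ : IsReturnWindow u b i₁ g₁)
    (hne : window u i₀ (b.length + 1) ≠ window u i₁ (b.length + 1)) :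
    Set.range (window u · (b.length + 1)) =
      ↑(rauzyPath u (b.length + 1) i₀ g₀ ∪ rauzyPath u (b.length + 1) i₁ g₁) := by
  refine subset_antisymm ?_ (by
    rw [Finset.coe_union]
    exact Set.union_subset (coe_rauzyPath_subset _) (coe_rauzyPath_subset _))
  rintro _ ⟨p, rfl⟩
  obtain ⟨p', hp', hpp'⟩ := hst.exists_factorAt_ge (isFactor_window u p (b.length + 1)) i₀
  rw [factorAt_iff_eq_window, length_window] at hpp'
  obtain ⟨i, g, h, hip', hp'g⟩ := exists_isReturnWindow_of_le
    (hst.exists_factorAt_ge ⟨i₀, h₀.factorAt_start⟩) h₀.factorAt_start hp'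
  have hfirst : window u i (b.length + 1) = window u i₀ (b.length + 1) ∨
      window u i (b.length + 1) = window u i₁ (b.length + 1) := by
    simp only [window_succ_eq_append_of_factorAt h.factorAt_start,
      window_succ_eq_append_of_factorAt h₀.factorAt_start,
      window_succ_eq_append_of_factorAt h₁.factorAt_start, List.append_cancel_left_eq,
      List.cons.injEq, and_true, ne_eq] at hne ⊢
    have hbool : ∀ x y z : Bool, y ≠ z → x = y ∨ x = z := by decide
    exact hbool _ _ _ hne
  have hpi : p' = i + (p' - i) := by omega
  show window u p (b.length + 1) ∈ _
  rw [Finset.coe_union, hpp', hpi]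
  simp only [rauzyPath, Finset.coe_image, Finset.coe_range, Set.mem_union, Set.mem_image,
    Set.mem_Iio]
  rcases hfirst with he | he
  · obtain ⟨rfl, hs⟩ := h.eq_of_window_eq hst hrs h₀ he
    exact Or.inl ⟨p' - i, by omega, (hs _ (by omega)).symm⟩
  · obtain ⟨rfl, hs⟩ := h.eq_of_window_eq hst hrs h₁ he
    exact Or.inr ⟨p' - i, by omega, (hs _ (by omega)).symm⟩

end RauzyPaths

theorem return_words_of_bispecial_general (u : ℕ → Bool) (hst : IsSturmian u)
    (b : List Bool)
    (hls : LeftSpecial u b) (hrs : RightSpecial u b)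
    (r₀ r₁ : List Bool) (h₀ : IsReturnWord u b r₀) (h₁ : IsReturnWord u b r₁)
    (hne : r₀ ≠ r₁) :
    r₀.length + r₁.length = b.length + 2 := by
  obtain ⟨i₀, hw₀, hr₀⟩ := h₀.exists_isReturnWindow
  obtain ⟨i₁, hw₁, hr₁⟩ := h₁.exists_isReturnWindow
  have hfirst : window u i₀ (b.length + 1) ≠ window u i₁ (b.length + 1) := by
    intro he
    obtain ⟨hg, hs⟩ := hw₀.eq_of_window_eq hst hrs hw₁ he
    exact hne (by rw [hr₀, hr₁, ← hg, window_eq_of_forall_window_succ_eq hs])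
  have hcount := hst (b.length + 1)
  rw [complexity_eq_ncard_range_window, hst.range_window_eq_union_rauzyPath hrs hw₀ hw₁ hfirst,
    Set.ncard_coe_finset,
    Finset.card_union_of_disjoint (hw₀.disjoint_rauzyPath hst hls hw₁ hfirst),
    hw₀.card_rauzyPath hst hls, hw₁.card_rauzyPath hst hls] at hcount
  omega

/-- the two return words of a bispecial factor `b` (containing both
letters) of a Sturmian word satisfy `|r₀| + |r₁| = |b| + 2`. -/
theorem return_words_of_bispecial (u : ℕ → Bool) (hst : IsSturmian u)
    (b : List Bool) (hb : IsFactor u b) (hlen : 1 ≤ b.length)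
    (hA : true ∈ b) (hB : false ∈ b)
    (hls : LeftSpecial u b) (hrs : RightSpecial u b)
    (r₀ r₁ : List Bool) (h₀ : IsReturnWord u b r₀) (h₁ : IsReturnWord u b r₁)
    (hne : r₀ ≠ r₁) :
    r₀.length + r₁.length = b.length + 2 :=
  return_words_of_bispecial_general u hst b hls hrs r₀ r₁ h₀ h₁ hne

end SturmianPaper
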